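/- Simplified global a priori error bound for WST-LSPG (Corollary 4.7, exponential growth in the number of windows): retaining the indexed window-residual setup with trial subspaces and the WST-LSPG optimality property, assume additionally that the constants are window-independent, i.e. σA k = σA, σB k = σB, σAic k = σAic, σBic k = σBic for all k (so c₁ k = c₁ = σA - σB*Δt*κ and c₂ k = c₂ = σAic + Δt*κ*σBic), that σAic > 0, and that 2 * σAic ≥ σA. Then for every window index k, ‖ũ k - u k‖ ≤ ((k + 1) / c₁) * (2 * σAic / σA)^k * Real.exp ( k * (Δt * κ * (σBic / σAic + σB / σA)) / (1 - Δt * κ * σB / σA) ) * max_{i ∈ Finset.range (k+1)} ‖R i (û i) (û₀ i)‖. (The factor k+1 counts the k+1 summands of the global bound; the error bound grows exponentially in the number of windows, not in the number of time steps.) -/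

import Mathlib

/-!
On each window the residual is coercive in its space–time argument with constant
`c₁ = σA - σB Δt κ` and Lipschitz in its initial-condition argument with constant
`c₂ = σAic + Δt κ σBic`. Combined with the LSPG optimality of `ũ` and the fact that projecting
onto `W` does not move `ũ₀ ∈ W` further from `u₀`, this gives the one-window estimate
`c₁ eₖ ≤ rₖ + 2 c₂ eₖ₋₁` for the errors `eₖ` and the best-approximation residuals `rₖ`.
With `G = (2σAic/σA) exp x` one has `2 c₂ ≤ c₁ G` (this is `1 + x ≤ exp x`, the choice of `x`
making `2 c₂ = c₁ (2σAic/σA)(1 + x)` an identity) and `G ≥ 1`, so unrolling the recurrence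
gives `eₖ ≤ (k + 1) Gᵏ maxᵢ rᵢ / c₁`.
-/

open Finset

section Residual

variable {V E Y : Type*} [NormedAddCommGroup V] [NormedSpace ℝ V]
  [NormedAddCommGroup E] [NormedSpace ℝ E] [NormedAddCommGroup Y] [NormedSpace ℝ Y]

def windowResidual (A B : V →L[ℝ] Y) (Aic Bic : E →L[ℝ] Y) (Δt : ℝ) (F : V → V) (f₀ : E → E)
    (w : V) (w₀ : E) : Y :=
  A w - Δt • B (F w) + Aic w₀ - Δt • Bic (f₀ w₀)

variable {A B : V →L[ℝ] Y} {Aic Bic : E →L[ℝ] Y} {Δt κ : ℝ} {F : V → V} {f₀ : E → E}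

theorem windowResidual_sub_windowResidual_left (w v : V) (w₀ : E) :
    windowResidual A B Aic Bic Δt F f₀ w w₀ - windowResidual A B Aic Bic Δt F f₀ v w₀ =
      A (w - v) - Δt • B (F w - F v) := by
  simp only [windowResidual, map_sub, smul_sub]
  abel

theorem windowResidual_sub_windowResidual_right (w : V) (a b : E) :
    windowResidual A B Aic Bic Δt F f₀ w a - windowResidual A B Aic Bic Δt F f₀ w b =
      Aic (a - b) - Δt • Bic (f₀ a - f₀ b) := by
  simp only [windowResidual, map_sub, smul_sub]
  abel

theorem mul_norm_sub_le_norm_windowResidual_sub {σA σB : ℝ} (hΔt : 0 ≤ Δt) (hσB : 0 ≤ σB)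
    (hA : ∀ x, σA * ‖x‖ ≤ ‖A x‖) (hB : ∀ x, ‖B x‖ ≤ σB * ‖x‖)
    (hF : ∀ x y, ‖F x - F y‖ ≤ κ * ‖x - y‖) (w v : V) (w₀ : E) :
    (σA - σB * Δt * κ) * ‖w - v‖ ≤
      ‖windowResidual A B Aic Bic Δt F f₀ w w₀ - windowResidual A B Aic Bic Δt F f₀ v w₀‖ := by
  have hBF : ‖Δt • B (F w - F v)‖ ≤ Δt * (σB * (κ * ‖w - v‖)) := by
    rw [norm_smul, Real.norm_of_nonneg hΔt]
    gcongr
    exact (hB _).trans (by gcongr; exact hF w v)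
  rw [windowResidual_sub_windowResidual_left]
  calc (σA - σB * Δt * κ) * ‖w - v‖ ≤ ‖A (w - v)‖ - Δt * (σB * (κ * ‖w - v‖)) := by
        linarith [hA (w - v)]
    _ ≤ ‖A (w - v)‖ - ‖Δt • B (F w - F v)‖ := by gcongr
    _ ≤ ‖A (w - v) - Δt • B (F w - F v)‖ := norm_sub_norm_le _ _

theorem norm_windowResidual_sub_le {σAic σBic : ℝ} (hΔt : 0 ≤ Δt) (hσBic : 0 ≤ σBic)
    (hAic : ∀ x, ‖Aic x‖ ≤ σAic * ‖x‖) (hBic : ∀ x, ‖Bic x‖ ≤ σBic * ‖x‖)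
    (hf₀ : ∀ x y, ‖f₀ x - f₀ y‖ ≤ κ * ‖x - y‖) (w : V) (a b : E) :
    ‖windowResidual A B Aic Bic Δt F f₀ w a - windowResidual A B Aic Bic Δt F f₀ w b‖ ≤
      (σAic + Δt * κ * σBic) * ‖a - b‖ := by
  have hBf : ‖Δt • Bic (f₀ a - f₀ b)‖ ≤ Δt * (σBic * (κ * ‖a - b‖)) := by
    rw [norm_smul, Real.norm_of_nonneg hΔt]
    gcongr
    exact (hBic _).trans (by gcongr; exact hf₀ a b)
  rw [windowResidual_sub_windowResidual_right]
  calc ‖Aic (a - b) - Δt • Bic (f₀ a - f₀ b)‖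
      ≤ ‖Aic (a - b)‖ + ‖Δt • Bic (f₀ a - f₀ b)‖ := norm_sub_le _ _
    _ ≤ σAic * ‖a - b‖ + Δt * (σBic * (κ * ‖a - b‖)) := add_le_add (hAic _) hBf
    _ = (σAic + Δt * κ * σBic) * ‖a - b‖ := by ring

end Residual

theorem Submodule.norm_sub_starProjection_le {𝕜 E : Type*} [RCLike 𝕜] [NormedAddCommGroup E]
    [InnerProductSpace 𝕜 E] {K : Submodule 𝕜 E} [K.HasOrthogonalProjection] {x : E} (hx : x ∈ K)
    (y : E) : ‖x - K.starProjection y‖ ≤ ‖x - y‖ := by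
  simpa [map_sub, K.starProjection_eq_self_iff.mpr hx] using K.norm_starProjection_apply_le (x - y)

theorem local_a_priori_error_bound {V E Y : Type*} [SeminormedAddCommGroup V]
    [SeminormedAddCommGroup E] [SeminormedAddCommGroup Y] {R : V → E → Y} {c₁ c₂ : ℝ} (hc₂ : 0 ≤ c₂)
    (hcoer : ∀ w v w₀, c₁ * ‖w - v‖ ≤ ‖R w w₀ - R v w₀‖)
    (hlip : ∀ w a b, ‖R w a - R w b‖ ≤ c₂ * ‖a - b‖)
    {u ũ û : V} {u₀ ũ₀ û₀ : E} (hu : R u u₀ = 0) (hopt : ‖R ũ ũ₀‖ ≤ ‖R û ũ₀‖)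
    (hproj : ‖ũ₀ - û₀‖ ≤ ‖ũ₀ - u₀‖) :
    c₁ * ‖ũ - u‖ ≤ ‖R û û₀‖ + 2 * c₂ * ‖ũ₀ - u₀‖ := by
  have hFOM : ‖R u ũ₀‖ ≤ c₂ * ‖ũ₀ - u₀‖ := by simpa [hu] using hlip u ũ₀ u₀
  have hROM : ‖R û ũ₀‖ ≤ ‖R û û₀‖ + c₂ * ‖ũ₀ - u₀‖ :=
    calc ‖R û ũ₀‖ ≤ ‖R û û₀‖ + ‖R û ũ₀ - R û û₀‖ := norm_le_insert' _ _
      _ ≤ ‖R û û₀‖ + c₂ * ‖ũ₀ - û₀‖ := by gcongr; exact hlip û ũ₀ û₀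
      _ ≤ ‖R û û₀‖ + c₂ * ‖ũ₀ - u₀‖ := by gcongr
  calc c₁ * ‖ũ - u‖ ≤ ‖R ũ ũ₀ - R u ũ₀‖ := hcoer ũ u ũ₀
    _ ≤ ‖R ũ ũ₀‖ + ‖R u ũ₀‖ := norm_sub_le _ _
    _ ≤ ‖R û û₀‖ + 2 * c₂ * ‖ũ₀ - u₀‖ := by linarith

theorem le_of_window_recurrence {e r : ℕ → ℝ} {c₁ a G : ℝ} (hc₁ : 0 < c₁) (hG : 1 ≤ G)
    (haG : a ≤ c₁ * G) (he : ∀ n, 0 ≤ e n) (hr : ∀ n, 0 ≤ r n) (h0 : c₁ * e 0 ≤ r 0)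
    (hstep : ∀ n, c₁ * e (n + 1) ≤ r (n + 1) + a * e n) (k : ℕ) :
    e k ≤ (k + 1) / c₁ * G ^ k * (range (k + 1)).sup' nonempty_range_add_one r := by
  set M : ℕ → ℝ := fun n => (range (n + 1)).sup' nonempty_range_add_one r
  have hM_nonneg (n : ℕ) : 0 ≤ M n := (hr 0).trans (le_sup' r (by simp))
  have hM_mono (n : ℕ) : M n ≤ M (n + 1) :=
    sup'_mono r (range_subset_range.2 (n + 1).le_succ) _
  have hr_le (n : ℕ) : r n ≤ M n := le_sup' r (self_mem_range_succ n)
  suffices h : ∀ n, c₁ * e n ≤ (n + 1) * G ^ n * M n by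
    rw [div_mul_eq_mul_div, div_mul_eq_mul_div, le_div_iff₀' hc₁]
    exact h k
  intro n
  induction n with
  | zero => simpa using h0.trans (hr_le 0)
  | succ n ih =>
    have hae : a * e n ≤ G * ((n + 1) * G ^ n * M n) :=
      calc a * e n ≤ c₁ * G * e n := by gcongr; exact he n
        _ = G * (c₁ * e n) := by ring
        _ ≤ G * ((n + 1) * G ^ n * M n) := by gcongr
    calc c₁ * e (n + 1) ≤ r (n + 1) + a * e n := hstep n
      _ ≤ M (n + 1) + (n + 1) * G ^ (n + 1) * M n := by
        rw [pow_succ]; linarith [hr_le (n + 1)]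
      _ ≤ G ^ (n + 1) * M (n + 1) + (n + 1) * G ^ (n + 1) * M (n + 1) := by
        gcongr
        · exact le_mul_of_one_le_left (hM_nonneg _) (one_le_pow₀ hG)
        · exact hM_mono n
      _ = (↑(n + 1) + 1) * G ^ (n + 1) * M (n + 1) := by push_cast; ring

noncomputable def windowGrowthFactor (σA σB σAic σBic Δt κ : ℝ) : ℝ :=
  2 * σAic / σA * Real.exp (Δt * κ * (σBic / σAic + σB / σA) / (1 - Δt * κ * σB / σA))

section GrowthFactor

variable {σA σB σAic σBic Δt κ : ℝ}

theorem windowGrowthFactor_pow (k : ℕ) :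
    windowGrowthFactor σA σB σAic σBic Δt κ ^ k = (2 * σAic / σA) ^ k *
      Real.exp (k * (Δt * κ * (σBic / σAic + σB / σA)) / (1 - Δt * κ * σB / σA)) := by
  rw [windowGrowthFactor, mul_pow, ← Real.exp_nat_mul, mul_div_assoc (k : ℝ)]

theorem windowGrowthFactor_denom_eq (hσA : σA ≠ 0) :
    1 - Δt * κ * σB / σA = (σA - σB * Δt * κ) / σA := by
  field_simp

theorem one_le_windowGrowthFactor (hσA : 0 < σA) (hσAic : 0 < σAic) (hAicA : σA ≤ 2 * σAic)
    (hΔt : 0 ≤ Δt) (hκ : 0 ≤ κ) (hσB : 0 ≤ σB) (hσBic : 0 ≤ σBic)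
    (hc₁ : 0 < σA - σB * Δt * κ) :
    1 ≤ windowGrowthFactor σA σB σAic σBic Δt κ := by
  have hexp : 1 ≤ Real.exp (Δt * κ * (σBic / σAic + σB / σA) / (1 - Δt * κ * σB / σA)) := by
    rw [Real.one_le_exp_iff, windowGrowthFactor_denom_eq hσA.ne']
    positivity
  calc (1 : ℝ) ≤ 2 * σAic / σA := (one_le_div hσA).2 hAicA
    _ ≤ _ := le_mul_of_one_le_right (by positivity) hexp

theorem two_mul_le_mul_windowGrowthFactor (hσA : 0 < σA) (hσAic : 0 < σAic)
    (hc₁ : 0 < σA - σB * Δt * κ) :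
    2 * (σAic + Δt * κ * σBic) ≤
      (σA - σB * Δt * κ) * windowGrowthFactor σA σB σAic σBic Δt κ := by
  rw [windowGrowthFactor, windowGrowthFactor_denom_eq hσA.ne']
  have hcx : (σA - σB * Δt * κ) *
      (Δt * κ * (σBic / σAic + σB / σA) / ((σA - σB * Δt * κ) / σA)) =
        Δt * κ * (σBic / σAic + σB / σA) * σA := by
    rw [div_div_eq_mul_div, mul_div_cancel₀ _ hc₁.ne']
  generalize Δt * κ * (σBic / σAic + σB / σA) / ((σA - σB * Δt * κ) / σA) = x at hcx ⊢
  calc 2 * (σAic + Δt * κ * σBic)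
      = 2 * σAic / σA * ((σA - σB * Δt * κ) + (σA - σB * Δt * κ) * x) := by
        rw [hcx]; field_simp; ring
    _ = (σA - σB * Δt * κ) * (2 * σAic / σA * (1 + x)) := by ring
    _ ≤ (σA - σB * Δt * κ) * (2 * σAic / σA * Real.exp x) := by
        gcongr; linarith [Real.add_one_le_exp x]

end GrowthFactor

theorem simplified_global_a_priori_error_bound_general
    (N : ℕ) (M : ℕ → ℕ)
    (A B : ∀ k : ℕ, EuclideanSpace ℝ (Fin (M k)) →L[ℝ] EuclideanSpace ℝ (Fin (M k)))
    (Aic Bic : ∀ k : ℕ, EuclideanSpace ℝ (Fin N) →L[ℝ] EuclideanSpace ℝ (Fin (M k)))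
    (Δt : ℝ) (hΔt : 0 < Δt)
    (F : ∀ k : ℕ, EuclideanSpace ℝ (Fin (M k)) → EuclideanSpace ℝ (Fin (M k)))
    (f₀ : ℕ → EuclideanSpace ℝ (Fin N) → EuclideanSpace ℝ (Fin N))
    (κ : ℝ) (hκ : 0 ≤ κ)
    (hF : ∀ k x y, ‖F k x - F k y‖ ≤ κ * ‖x - y‖)
    (hf₀ : ∀ k x y, ‖f₀ k x - f₀ k y‖ ≤ κ * ‖x - y‖)
    -- window-independent constants
    (σA σB σAic σBic : ℝ)
    (hσA : 0 < σA) (hA : ∀ k x, σA * ‖x‖ ≤ ‖A k x‖)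
    (hσB : 0 ≤ σB) (hB : ∀ k x, ‖B k x‖ ≤ σB * ‖x‖)
    (hσAic : 0 < σAic) (hAic : ∀ k x, ‖Aic k x‖ ≤ σAic * ‖x‖)
    (hσBic : 0 ≤ σBic) (hBic : ∀ k x, ‖Bic k x‖ ≤ σBic * ‖x‖)
    (hAicA : 2 * σAic ≥ σA)
    (R : ∀ k : ℕ, EuclideanSpace ℝ (Fin (M k)) → EuclideanSpace ℝ (Fin N) →
      EuclideanSpace ℝ (Fin (M k)))
    (hR : ∀ k w w₀, R k w w₀ =
      A k w - Δt • B k (F k w) + Aic k w₀ - Δt • Bic k (f₀ k w₀))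
    (c₁ c₂ : ℝ)
    (hc₁ : c₁ = σA - σB * Δt * κ)
    (hc₂ : c₂ = σAic + Δt * κ * σBic)
    (hc₁pos : 0 < c₁)
    (u : ∀ k : ℕ, EuclideanSpace ℝ (Fin (M k))) (u₀ : ℕ → EuclideanSpace ℝ (Fin N))
    (hFOM : ∀ k, R k (u k) (u₀ k) = 0)
    (uR : ∀ k : ℕ, EuclideanSpace ℝ (Fin (M k))) (uR₀ : ℕ → EuclideanSpace ℝ (Fin N))
    (hIC0 : uR₀ 0 = u₀ 0)
    (hIC : ∀ k, 1 ≤ k → ‖uR₀ k - u₀ k‖ ≤ ‖uR (k - 1) - u (k - 1)‖)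
    (S : ∀ k : ℕ, Set (EuclideanSpace ℝ (Fin (M k))))
    (W : ℕ → Submodule ℝ (EuclideanSpace ℝ (Fin N)))
    (huR₀W : ∀ k, uR₀ k ∈ W k)
    (uP : ∀ k : ℕ, EuclideanSpace ℝ (Fin (M k)))
    (huPS : ∀ k, uP k ∈ S k)
    (uP₀ : ℕ → EuclideanSpace ℝ (Fin N))
    (huP₀ : ∀ k, uP₀ k = (Submodule.orthogonalProjectionOnto (W k) (u₀ k) : EuclideanSpace ℝ (Fin N)))
    (hopt : ∀ k, ∀ w ∈ S k, ‖R k (uR k) (uR₀ k)‖ ≤ ‖R k w (uR₀ k)‖)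
    (k : ℕ) :
    ‖uR k - u k‖ ≤ ((k + 1 : ℝ) / c₁) * (2 * σAic / σA) ^ k *
      Real.exp (k * (Δt * κ * (σBic / σAic + σB / σA)) / (1 - Δt * κ * σB / σA)) *
      (Finset.range (k + 1)).sup' Finset.nonempty_range_add_one
        (fun i => ‖R i (uP i) (uP₀ i)‖) := by
  have hRk (k : ℕ) : R k = windowResidual (A k) (B k) (Aic k) (Bic k) Δt (F k) (f₀ k) :=
    funext₂ (hR k)
  have hc₂_nonneg : 0 ≤ c₂ := by rw [hc₂]; positivity
  have hwindow (k : ℕ) :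
      c₁ * ‖uR k - u k‖ ≤ ‖R k (uP k) (uP₀ k)‖ + 2 * c₂ * ‖uR₀ k - u₀ k‖ := by
    refine local_a_priori_error_bound hc₂_nonneg (fun w v w₀ => ?_) (fun w a b => ?_)
      (hFOM k) (hopt k _ (huPS k)) ?_
    · rw [hRk, hc₁]
      exact mul_norm_sub_le_norm_windowResidual_sub hΔt.le hσB (hA k) (hB k) (hF k) w v w₀
    · rw [hRk, hc₂]
      exact norm_windowResidual_sub_le hΔt.le hσBic (hAic k) (hBic k) (hf₀ k) w a b
    · rw [huP₀]
      exact Submodule.norm_sub_starProjection_le (huR₀W k) (u₀ k)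
  have hbound := le_of_window_recurrence (e := fun n => ‖uR n - u n‖)
    (r := fun i => ‖R i (uP i) (uP₀ i)‖) (a := 2 * c₂) hc₁pos
    (one_le_windowGrowthFactor hσA hσAic hAicA hΔt.le hκ hσB hσBic (hc₁ ▸ hc₁pos))
    (by rw [hc₁, hc₂]; exact two_mul_le_mul_windowGrowthFactor hσA hσAic (hc₁ ▸ hc₁pos))
    (fun _ => norm_nonneg _) (fun _ => norm_nonneg _)
    (by simpa [hIC0] using hwindow 0)
    (fun n => (hwindow (n + 1)).trans (by gcongr; simpa using hIC (n + 1) (by omega))) k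
  rwa [windowGrowthFactor_pow, ← mul_assoc] at hbound

/-- Simplified global a priori error bound for WST-LSPG (Corollary 4.7):
exponential growth in the number of windows. -/
theorem simplified_global_a_priori_error_bound
    (N : ℕ) (M : ℕ → ℕ)
    (A B : ∀ k : ℕ, EuclideanSpace ℝ (Fin (M k)) →L[ℝ] EuclideanSpace ℝ (Fin (M k)))
    (Aic Bic : ∀ k : ℕ, EuclideanSpace ℝ (Fin N) →L[ℝ] EuclideanSpace ℝ (Fin (M k)))
    (Δt : ℝ) (hΔt : 0 < Δt)
    (F : ∀ k : ℕ, EuclideanSpace ℝ (Fin (M k)) → EuclideanSpace ℝ (Fin (M k)))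
    (f₀ : ℕ → EuclideanSpace ℝ (Fin N) → EuclideanSpace ℝ (Fin N))
    (κ : ℝ) (hκ : 0 ≤ κ)
    (hF : ∀ k x y, ‖F k x - F k y‖ ≤ κ * ‖x - y‖)
    (hf₀ : ∀ k x y, ‖f₀ k x - f₀ k y‖ ≤ κ * ‖x - y‖)
    -- window-independent constants
    (σA σB σAic σBic : ℝ)
    (hσA : 0 < σA) (hA : ∀ k x, σA * ‖x‖ ≤ ‖A k x‖)
    (hσB : 0 ≤ σB) (hB : ∀ k x, ‖B k x‖ ≤ σB * ‖x‖)
    (hσAic : 0 < σAic) (hAic : ∀ k x, ‖Aic k x‖ ≤ σAic * ‖x‖)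
    (hσBic : 0 ≤ σBic) (hBic : ∀ k x, ‖Bic k x‖ ≤ σBic * ‖x‖)
    (hAicA : 2 * σAic ≥ σA)
    (R : ∀ k : ℕ, EuclideanSpace ℝ (Fin (M k)) → EuclideanSpace ℝ (Fin N) →
      EuclideanSpace ℝ (Fin (M k)))
    (hR : ∀ k w w₀, R k w w₀ =
      A k w - Δt • B k (F k w) + Aic k w₀ - Δt • Bic k (f₀ k w₀))
    (c₁ c₂ : ℝ)
    (hc₁ : c₁ = σA - σB * Δt * κ)
    (hc₂ : c₂ = σAic + Δt * κ * σBic)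
    (hc₁pos : 0 < c₁)
    (u : ∀ k : ℕ, EuclideanSpace ℝ (Fin (M k))) (u₀ : ℕ → EuclideanSpace ℝ (Fin N))
    (hFOM : ∀ k, R k (u k) (u₀ k) = 0)
    (uR : ∀ k : ℕ, EuclideanSpace ℝ (Fin (M k))) (uR₀ : ℕ → EuclideanSpace ℝ (Fin N))
    (hIC0 : uR₀ 0 = u₀ 0)
    (hIC : ∀ k, 1 ≤ k → ‖uR₀ k - u₀ k‖ ≤ ‖uR (k - 1) - u (k - 1)‖)
    (S : ∀ k : ℕ, Set (EuclideanSpace ℝ (Fin (M k))))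
    (W : ℕ → Submodule ℝ (EuclideanSpace ℝ (Fin N)))
    (huR₀W : ∀ k, uR₀ k ∈ W k)
    (uP : ∀ k : ℕ, EuclideanSpace ℝ (Fin (M k)))
    (huPS : ∀ k, uP k ∈ S k)
    (huPclosest : ∀ k, ∀ w ∈ S k, ‖u k - uP k‖ ≤ ‖u k - w‖)
    (uP₀ : ℕ → EuclideanSpace ℝ (Fin N))
    (huP₀ : ∀ k, uP₀ k = (Submodule.orthogonalProjectionOnto (W k) (u₀ k) : EuclideanSpace ℝ (Fin N)))
    (hopt : ∀ k, ∀ w ∈ S k, ‖R k (uR k) (uR₀ k)‖ ≤ ‖R k w (uR₀ k)‖)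
    (k : ℕ) :
    ‖uR k - u k‖ ≤ ((k + 1 : ℝ) / c₁) * (2 * σAic / σA) ^ k *
      Real.exp (k * (Δt * κ * (σBic / σAic + σB / σA)) / (1 - Δt * κ * σB / σA)) *
      (Finset.range (k + 1)).sup' Finset.nonempty_range_add_one
        (fun i => ‖R i (uP i) (uP₀ i)‖) :=
  simplified_global_a_priori_error_bound_general N M A B Aic Bic Δt hΔt F f₀ κ hκ hF hf₀ σA σB σAic
    σBic hσA hA hσB hB hσAic hAic hσBic hBic hAicA R hR c₁ c₂ hc₁ hc₂ hc₁pos u u₀ hFOM uR uR₀ hIC0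
    hIC S W huR₀W uP huPS uP₀ huP₀ hopt k
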